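/- Let A and B be real symmetric positive definite d×d matrices and let ℝ^d = V₁ ⊕ … ⊕ V_r be the orthogonal decomposition into eigenspaces of A with pairwise distinct eigenvalues. Then M(A, B) + d = Σ_{i=1}^r √( tr(B|_{V_i}) · tr(B⁻¹|_{V_i}) ). -/

import Mathlib

open Matrix

/-- Eigenspace of a `d × d` real matrix `A` (acting on Euclidean space) for the (potential)
eigenvalue `μ`. -/
noncomputable def eigSp {d : ℕ} (A : Matrix (Fin d) (Fin d) ℝ) (μ : ℝ) :
    Submodule ℝ (EuclideanSpace ℝ (Fin d)) :=
  Module.End.eigenspace (Matrix.toEuclideanLin A) μ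

/-- `A` is aligned with `B` if every eigenspace of `B` is contained in an eigenspace of `A`. -/
def IsAligned {d : ℕ} (A B : Matrix (Fin d) (Fin d) ℝ) : Prop :=
  ∀ μ : ℝ, ∃ ν : ℝ, eigSp B μ ≤ eigSp A ν

/-- The misalignment `M(A, B)`: the infimum, over symmetric positive definite matrices `S`
aligned with `A`, of `(1/2) · tr(S⁻¹ B + B⁻¹ S) − d`. -/
noncomputable def misalignment {d : ℕ} (A B : Matrix (Fin d) (Fin d) ℝ) : ℝ :=
  sInf {m : ℝ | ∃ S : Matrix (Fin d) (Fin d) ℝ,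
    S.PosDef ∧ IsAligned S A ∧ m = (1 / 2) * (S⁻¹ * B + B⁻¹ * S).trace - d}

/-- `tr(B|_V)`: the trace of the linear map `V → V`, `v ↦ pr_V (B v)`, where `pr_V` is the
orthogonal projection onto the subspace `V`. -/
noncomputable def restrictTrace {d : ℕ} (B : Matrix (Fin d) (Fin d) ℝ)
    (V : Submodule ℝ (EuclideanSpace ℝ (Fin d))) : ℝ :=
  LinearMap.trace ℝ V
    (((V.orthogonalProjectionOnto).toLinearMap.comp (Matrix.toEuclideanLin B)).comp V.subtype)

/-!
If `ℝ^d = V₁ ⊕ … ⊕ V_r` is the eigenspace decomposition of `A`, a positive definite `S` is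
aligned with `A` exactly when it acts on each `Vᵢ` as a positive scalar `cᵢ`, i.e.
`S = ∑ cᵢ Pᵢ` with `Pᵢ` the orthogonal projections; then `S⁻¹ = ∑ cᵢ⁻¹ Pᵢ`, so
`tr(S⁻¹B + B⁻¹S) = ∑ (cᵢ⁻¹ tr(B|_{Vᵢ}) + cᵢ tr(B⁻¹|_{Vᵢ}))`. The infimum splits into `r`
one-variable problems, each solved by AM-GM at `cᵢ = √(tr(B|_{Vᵢ}) / tr(B⁻¹|_{Vᵢ}))`.
-/

open Module
open scoped RealInnerProductSpace

section SpectralOp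

variable {ι E : Type*} [Fintype ι] [NormedAddCommGroup E] [InnerProductSpace ℝ E]
  [FiniteDimensional ℝ E] {V : ι → Submodule ℝ E}

noncomputable def spectralOp (V : ι → Submodule ℝ E) (c : ι → ℝ) : Module.End ℝ E :=
  ∑ i, c i • ((V i).starProjection : E →ₗ[ℝ] E)

lemma isPositive_spectralOp {c : ι → ℝ} (hc : 0 ≤ c) : (spectralOp V c).IsPositive :=
  LinearMap.isPositive_sum _ fun i _ =>
    (ContinuousLinearMap.IsPositive.of_isStarProjection
      isStarProjection_starProjection).toLinearMap.smul_of_nonneg (hc i)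

lemma trace_spectralOp_mul (c : ι → ℝ) (T : Module.End ℝ E) :
    LinearMap.trace ℝ E (spectralOp V c * T)
      = ∑ i, c i * LinearMap.trace ℝ E ((V i).starProjection ∘ₗ T) := by
  simp [spectralOp, Finset.sum_mul, Module.End.mul_eq_comp]

lemma spectralOp_apply_of_mem (hV : OrthogonalFamily ℝ (fun i => V i) fun i => (V i).subtypeₗᵢ)
    (c : ι → ℝ) {i : ι} {v : E} (hv : v ∈ V i) : spectralOp V c v = c i • v := by
  rw [spectralOp, LinearMap.sum_apply, Finset.sum_eq_single i]
  · simp [Submodule.starProjection_eq_self_iff.mpr hv]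
  · intro j _ hji
    simp [((V j).starProjection_apply_eq_zero_iff).mpr (hV.isOrtho hji.symm hv)]
  · simp

lemma eq_spectralOp_of_forall_mem
    (hV : OrthogonalFamily ℝ (fun i => V i) fun i => (V i).subtypeₗᵢ) (hsup : ⨆ i, V i = ⊤)
    {T : Module.End ℝ E} {c : ι → ℝ} (hT : ∀ i, ∀ v ∈ V i, T v = c i • v) :
    T = spectralOp V c := by
  ext v
  conv_lhs => rw [← hV.sum_projection_of_mem_iSup v (hsup ▸ Submodule.mem_top)]
  rw [map_sum, spectralOp, LinearMap.sum_apply]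
  exact Finset.sum_congr rfl fun i _ => hT i _ ((V i).starProjection_apply_mem v)

lemma spectralOp_mul_spectralOp_inv
    (hV : OrthogonalFamily ℝ (fun i => V i) fun i => (V i).subtypeₗᵢ) (hsup : ⨆ i, V i = ⊤)
    {c : ι → ℝ} (hc : ∀ i, c i ≠ 0) : spectralOp V c * spectralOp V c⁻¹ = 1 :=
  (eq_spectralOp_of_forall_mem (c := 1) hV hsup fun i v hv => by
    simp [spectralOp_apply_of_mem hV _ hv, smul_smul, hc i]).trans
  (eq_spectralOp_of_forall_mem hV hsup fun _ _ _ => by simp).symm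

end SpectralOp

lemma trace_orthogonalProjectionOnto_comp_pos {E : Type*} [NormedAddCommGroup E]
    [InnerProductSpace ℝ E] {T : Module.End ℝ E} (hT : ∀ x ≠ 0, 0 < ⟪x, T x⟫)
    {V : Submodule ℝ E} [FiniteDimensional ℝ V] (hV : V ≠ ⊥) :
    0 < LinearMap.trace ℝ V (V.orthogonalProjectionOnto.toLinearMap ∘ₗ T ∘ₗ V.subtype) := by
  let b := stdOrthonormalBasis ℝ V
  have : Nonempty (Fin (finrank ℝ V)) :=
    Fin.pos_iff_nonempty.mp (Nat.pos_of_ne_zero (Submodule.finrank_eq_zero.not.mpr hV))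
  rw [LinearMap.trace_eq_sum_inner _ b]
  refine Finset.sum_pos (fun k _ => ?_) Finset.univ_nonempty
  simpa using hT (b k) (by simpa using b.orthonormal.ne_zero k)

section EuclideanMatrix

variable {d : ℕ}

lemma Matrix.trace_toEuclideanLin (M : Matrix (Fin d) (Fin d) ℝ) :
    LinearMap.trace ℝ _ (toEuclideanLin M) = M.trace := by
  rw [toEuclideanLin_eq_toLin_orthonormal, Matrix.trace_toLin_eq]

lemma Matrix.PosDef.inner_toEuclideanLin_self_pos {S : Matrix (Fin d) (Fin d) ℝ} (hS : S.PosDef)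
    {x : EuclideanSpace ℝ (Fin d)} (hx : x ≠ 0) : 0 < ⟪x, toEuclideanLin S x⟫ := by
  rw [← coe_toEuclideanCLM_eq_toEuclideanLin, ContinuousLinearMap.coe_coe, inner_toEuclideanCLM]
  exact hS.dotProduct_mulVec_pos (by simpa using hx)

lemma Matrix.PosDef.pos_of_mem_eigSp {S : Matrix (Fin d) (Fin d) ℝ} (hS : S.PosDef) {ν : ℝ}
    {v : EuclideanSpace ℝ (Fin d)} (hv : v ∈ eigSp S ν) (hv0 : v ≠ 0) : 0 < ν := by
  have := hS.inner_toEuclideanLin_self_pos hv0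
  rw [Module.End.mem_eigenspace_iff.mp hv, real_inner_smul_right] at this
  exact (pos_iff_pos_of_mul_pos this).mpr (real_inner_self_pos.mpr hv0)

lemma restrictTrace_eq_trace_starProjection_comp (B : Matrix (Fin d) (Fin d) ℝ)
    (V : Submodule ℝ (EuclideanSpace ℝ (Fin d))) :
    restrictTrace B V = LinearMap.trace ℝ _ (V.starProjection ∘ₗ toEuclideanLin B) := by
  rw [restrictTrace, ← LinearMap.trace_comp_comm']
  rfl

lemma Matrix.PosDef.restrictTrace_pos {B : Matrix (Fin d) (Fin d) ℝ} (hB : B.PosDef)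
    {V : Submodule ℝ (EuclideanSpace ℝ (Fin d))} (hV : V ≠ ⊥) : 0 < restrictTrace B V :=
  trace_orthogonalProjectionOnto_comp_pos (fun _ => hB.inner_toEuclideanLin_self_pos) hV

end EuclideanMatrix

section SpectralMatrix

variable {d : ℕ} {ι : Type*} [Fintype ι] {V : ι → Submodule ℝ (EuclideanSpace ℝ (Fin d))}
  {S : Matrix (Fin d) (Fin d) ℝ} {c : ι → ℝ}

lemma mul_symm_spectralOp_inv_eq_one
    (hV : OrthogonalFamily ℝ (fun i => V i) fun i => (V i).subtypeₗᵢ) (hsup : ⨆ i, V i = ⊤)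
    (hS : toEuclideanLin S = spectralOp V c) (hc : ∀ i, c i ≠ 0) :
    S * toEuclideanLin.symm (spectralOp V c⁻¹) = 1 :=
  toEuclideanLin.injective <| by
    rw [toLpLin_mul_same, hS, LinearEquiv.apply_symm_apply, toLpLin_one, ← Module.End.mul_eq_comp,
      spectralOp_mul_spectralOp_inv hV hsup hc, Module.End.one_eq_id]

lemma posDef_of_toEuclideanLin_eq_spectralOp
    (hV : OrthogonalFamily ℝ (fun i => V i) fun i => (V i).subtypeₗᵢ) (hsup : ⨆ i, V i = ⊤)
    (hS : toEuclideanLin S = spectralOp V c) (hc : ∀ i, 0 < c i) : S.PosDef :=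
  (isPositive_toEuclideanLin_iff.mp (hS ▸ isPositive_spectralOp fun i => (hc i).le))
    |>.posDef_iff_isUnit.mpr
      (.of_mul_eq_one _ (mul_symm_spectralOp_inv_eq_one hV hsup hS fun i => (hc i).ne'))

lemma trace_inv_mul_add_inv_mul_of_toEuclideanLin_eq_spectralOp
    (hV : OrthogonalFamily ℝ (fun i => V i) fun i => (V i).subtypeₗᵢ) (hsup : ⨆ i, V i = ⊤)
    (hS : toEuclideanLin S = spectralOp V c) (hc : ∀ i, c i ≠ 0) (B : Matrix (Fin d) (Fin d) ℝ) :
    (S⁻¹ * B + B⁻¹ * S).trace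
      = ∑ i, ((c i)⁻¹ * restrictTrace B (V i) + c i * restrictTrace B⁻¹ (V i)) := by
  have hSinv : toEuclideanLin S⁻¹ = spectralOp V c⁻¹ := by
    rw [inv_eq_right_inv (mul_symm_spectralOp_inv_eq_one hV hsup hS hc),
      LinearEquiv.apply_symm_apply]
  rw [trace_add, ← trace_toEuclideanLin, ← trace_toEuclideanLin, toLpLin_mul_same,
    toLpLin_mul_same, hSinv, hS, ← Module.End.mul_eq_comp, ← Module.End.mul_eq_comp,
    LinearMap.trace_mul_comm ℝ (toEuclideanLin B⁻¹), trace_spectralOp_mul, trace_spectralOp_mul,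
    ← Finset.sum_add_distrib]
  simp only [restrictTrace_eq_trace_starProjection_comp, Pi.inv_apply]

lemma exists_pos_toEuclideanLin_eq_spectralOp
    (hV : OrthogonalFamily ℝ (fun i => V i) fun i => (V i).subtypeₗᵢ) (hsup : ⨆ i, V i = ⊤)
    (hne : ∀ i, V i ≠ ⊥) (hS : S.PosDef) (hSV : ∀ i, ∃ ν, V i ≤ eigSp S ν) :
    ∃ c : ι → ℝ, (∀ i, 0 < c i) ∧ toEuclideanLin S = spectralOp V c := by
  choose ν hν using hSV
  refine ⟨ν, fun i => ?_, eq_spectralOp_of_forall_mem hV hsup fun i v hv =>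
    Module.End.mem_eigenspace_iff.mp (hν i hv)⟩
  obtain ⟨v, hv, hv0⟩ := (Submodule.ne_bot_iff _).mp (hne i)
  exact hS.pos_of_mem_eigSp (hν i hv) hv0

end SpectralMatrix

section Eigenspaces

variable {d : ℕ} {ι : Type*} {A : Matrix (Fin d) (Fin d) ℝ} {μ : ι → ℝ}

lemma orthogonalFamily_eigSp (hA : A.IsHermitian) (hμ : Function.Injective μ) :
    OrthogonalFamily ℝ (fun i => eigSp A (μ i)) fun i => (eigSp A (μ i)).subtypeₗᵢ :=
  (isSymmetric_toEuclideanLin_iff.mpr hA).orthogonalFamily_eigenspaces.comp hμ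

lemma eigSp_eq_bot_of_forall_ne (hA : A.IsHermitian) (hsup : ⨆ i, eigSp A (μ i) = ⊤) {t : ℝ}
    (ht : ∀ i, μ i ≠ t) : eigSp A t = ⊥ := by
  rw [← Submodule.isOrtho_top_right, ← hsup, Submodule.isOrtho_iSup_right]
  exact fun i => ((isSymmetric_toEuclideanLin_iff.mpr hA).orthogonalFamily_eigenspaces.isOrtho
    (ht i)).symm

lemma isAligned_of_toEuclideanLin_eq_spectralOp [Fintype ι] (hA : A.IsHermitian)
    (hμ : Function.Injective μ) (hsup : ⨆ i, eigSp A (μ i) = ⊤) {S : Matrix (Fin d) (Fin d) ℝ}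
    {c : ι → ℝ} (hS : toEuclideanLin S = spectralOp (fun i => eigSp A (μ i)) c) :
    IsAligned S A := by
  intro t
  by_cases ht : ∃ i, μ i = t
  · obtain ⟨i, rfl⟩ := ht
    exact ⟨c i, fun v hv => Module.End.mem_eigenspace_iff.mpr
      (hS ▸ spectralOp_apply_of_mem (orthogonalFamily_eigSp hA hμ) c hv)⟩
  · push Not at ht
    exact ⟨0, (eigSp_eq_bot_of_forall_ne hA hsup ht).symm ▸ bot_le⟩

end Eigenspaces

lemma sqrt_mul_le_half_inv_mul_add_mul {a b c : ℝ} (ha : 0 ≤ a) (hb : 0 ≤ b) (hc : 0 < c) :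
    √(a * b) ≤ 1 / 2 * (c⁻¹ * a + c * b) := by
  have hab : a * b = (c⁻¹ * a) * (c * b) := by field_simp
  rw [Real.sqrt_le_iff]
  constructor
  · positivity
  · rw [hab]
    nlinarith [sq_nonneg (c⁻¹ * a - c * b)]

lemma half_inv_mul_add_mul_sqrt_div_sqrt {a b : ℝ} (ha : 0 < a) (hb : 0 < b) :
    1 / 2 * ((√a / √b)⁻¹ * a + (√a / √b) * b) = √(a * b) := by
  have hsa := Real.sq_sqrt ha.le
  have hsb := Real.sq_sqrt hb.le
  have hb_pos := Real.sqrt_pos.mpr hb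
  rw [Real.sqrt_mul ha.le]
  field_simp
  nlinarith

/-- If `ℝ^d = V₁ ⊕ … ⊕ V_r` is the orthogonal decomposition into eigenspaces
of the positive definite matrix `A` with pairwise distinct eigenvalues, then for every positive
definite `B`: `M(A, B) + d = ∑ i, √( tr(B|_{Vᵢ}) · tr(B⁻¹|_{Vᵢ}) )`. -/
theorem misalignment_add_dim_eq_sum_sqrt {d : ℕ}
    (A B : Matrix (Fin d) (Fin d) ℝ) (hA : A.PosDef) (hB : B.PosDef)
    (r : ℕ) (V : Fin r → Submodule ℝ (EuclideanSpace ℝ (Fin d))) (μ : Fin r → ℝ)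
    (hμ : Function.Injective μ)
    (hV : ∀ i, V i = eigSp A (μ i)) (hne : ∀ i, V i ≠ ⊥)
    (hsup : (⨆ i, V i) = ⊤) :
    misalignment A B + d
      = ∑ i, Real.sqrt (restrictTrace B (V i) * restrictTrace B⁻¹ (V i)) := by
  obtain rfl : V = fun i => eigSp A (μ i) := funext hV
  have horth := orthogonalFamily_eigSp hA.isHermitian hμ
  set a := fun i => restrictTrace B (eigSp A (μ i))
  set b := fun i => restrictTrace B⁻¹ (eigSp A (μ i))
  have ha i : 0 < a i := hB.restrictTrace_pos (hne i)
  have hb i : 0 < b i := hB.inv.restrictTrace_pos (hne i)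
  suffices IsLeast {m : ℝ | ∃ S : Matrix (Fin d) (Fin d) ℝ,
      S.PosDef ∧ IsAligned S A ∧ m = (1 / 2) * (S⁻¹ * B + B⁻¹ * S).trace - d}
      (∑ i, √(a i * b i) - d) by
    rw [misalignment, this.csInf_eq, sub_add_cancel]
  constructor
  · set c := fun i => √(a i) / √(b i)
    have hc i : 0 < c i := div_pos (Real.sqrt_pos.mpr (ha i)) (Real.sqrt_pos.mpr (hb i))
    have hS := toEuclideanLin.apply_symm_apply (spectralOp (fun i => eigSp A (μ i)) c)
    refine ⟨_, posDef_of_toEuclideanLin_eq_spectralOp horth hsup hS hc,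
      isAligned_of_toEuclideanLin_eq_spectralOp hA.isHermitian hμ hsup hS, ?_⟩
    rw [trace_inv_mul_add_inv_mul_of_toEuclideanLin_eq_spectralOp horth hsup hS
      (fun i => (hc i).ne'), Finset.mul_sum]
    congr 1
    exact Finset.sum_congr rfl fun i _ => (half_inv_mul_add_mul_sqrt_div_sqrt (ha i) (hb i)).symm
  · rintro m ⟨S, hS, hal, rfl⟩
    obtain ⟨c, hc, hSc⟩ :=
      exists_pos_toEuclideanLin_eq_spectralOp horth hsup hne hS fun i => hal (μ i)
    rw [trace_inv_mul_add_inv_mul_of_toEuclideanLin_eq_spectralOp horth hsup hSc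
      (fun i => (hc i).ne'), Finset.mul_sum]
    gcongr with i
    exact sqrt_mul_le_half_inv_mul_add_mul (ha i).le (hb i).le (hc i)
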